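/- Completeness of box adaptation: if Γ ⊢ x ⇑ T (widened variable typing) and Γ ⊢→ T <: U (algorithmic subtyping), then Γ ⊢ x : T ↝ x <: U, i.e. adaptation subtyping succeeds and returns the input variable x unchanged. -/

import Mathlib

set_option maxHeartbeats 1000000

/-! # Syntax of capture calculus CC<: -/

-- Shape types and types of CC<: (a shape type `S` used as a type is `{} S`).
mutual
inductive ShapeTy : Type where
  | tvar : ℕ → ShapeTy                       -- X
  | top : ShapeTy                            -- ⊤
  | arrow : ℕ → Ty → Ty → ShapeTy            -- ∀(x:U)T
  | tarrow : ℕ → ShapeTy → Ty → ShapeTy      -- ∀[X<:S]T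
  | box : Ty → ShapeTy                       -- □T
deriving DecidableEq
inductive Ty : Type where
  | capt : Finset ℕ → ShapeTy → Ty           -- C S
deriving DecidableEq
end

/-- Environment bindings: `x : T` and `X <: S`. -/
inductive Binding : Type where
  | val : ℕ → Ty → Binding
  | tvar : ℕ → ShapeTy → Binding
deriving DecidableEq

/-- Environments, newest binding first (`Γ, b` is `b :: Γ`). -/
abbrev Env := List Binding

def envDom : Env → Finset ℕ
  | [] => ∅
  | Binding.val x _ :: Γ => insert x (envDom Γ)
  | Binding.tvar _ _ :: Γ => envDom Γ

def envTDom : Env → Finset ℕ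
  | [] => ∅
  | Binding.val _ _ :: Γ => envTDom Γ
  | Binding.tvar X _ :: Γ => insert X (envTDom Γ)

/-- Terms of CC<: in monadic normal form. -/
inductive Tm : Type where
  | var : ℕ → Tm
  | abs : ℕ → Ty → Tm → Tm                   -- λ(x:T)t
  | tabs : ℕ → ShapeTy → Tm → Tm             -- λ[X<:S]t
  | app : ℕ → ℕ → Tm                         -- x y
  | tapp : ℕ → ShapeTy → Tm                  -- x[S]
  | letin : ℕ → Tm → Tm → Tm                 -- let x = s in t
  | box : ℕ → Tm                             -- □x
  | unbox : Finset ℕ → ℕ → Tm                -- C ⟜ x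
deriving DecidableEq

def Tm.isValue : Tm → Bool
  | .abs _ _ _ => true
  | .tabs _ _ _ => true
  | .box _ => true
  | _ => false

def Tm.isVar : Tm → Bool
  | .var _ => true
  | _ => false

/-- Captured variables of a term. -/
def cv : Tm → Finset ℕ
  | .var x => {x}
  | .abs x _ t => cv t \ {x}
  | .tabs _ _ t => cv t
  | .app x y => {x, y}
  | .tapp x _ => {x}
  | .letin x s t => if s.isValue = true ∧ x ∉ cv t then cv t else cv s ∪ (cv t \ {x})
  | .box _ => ∅
  | .unbox C x => insert x C

/-- Capture set of a type. -/
def cvTy : Ty → Finset ℕ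
  | .capt C _ => C

/-! ## Substitution, renaming, free variables, avoidance -/

/-- Renaming `[z := y]` on capture sets. -/
def renameSet (z y : ℕ) (C : Finset ℕ) : Finset ℕ :=
  if z ∈ C then insert y (C \ {z}) else C

mutual
/-- Renaming `[z := y]` on shape types. -/
def renameShape (z y : ℕ) : ShapeTy → ShapeTy
  | .tvar X => .tvar X
  | .top => .top
  | .arrow x U T => .arrow x (renameTy z y U) (renameTy z y T)
  | .tarrow X S T => .tarrow X (renameShape z y S) (renameTy z y T)
  | .box T => .box (renameTy z y T)
/-- Renaming `[z := y]` on types. -/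
def renameTy (z y : ℕ) : Ty → Ty
  | .capt C S => .capt (renameSet z y C) (renameShape z y S)
end

def renameBinding (z y : ℕ) : Binding → Binding
  | .val x T => .val x (renameTy z y T)
  | .tvar X S => .tvar X (renameShape z y S)

def renameEnv (z y : ℕ) : Env → Env := List.map (renameBinding z y)

mutual
/-- Type substitution `[X := R]` on shape types. -/
def tsubstShape (X : ℕ) (R : ShapeTy) : ShapeTy → ShapeTy
  | .tvar Y => if Y = X then R else .tvar Y
  | .top => .top
  | .arrow x U T => .arrow x (tsubstTy X R U) (tsubstTy X R T)
  | .tarrow Y S T => .tarrow Y (tsubstShape X R S) (tsubstTy X R T)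
  | .box T => .box (tsubstTy X R T)
/-- Type substitution `[X := R]` on types. -/
def tsubstTy (X : ℕ) (R : ShapeTy) : Ty → Ty
  | .capt C S => .capt C (tsubstShape X R S)
end

def tsubstBinding (X : ℕ) (R : ShapeTy) : Binding → Binding
  | .val x T => .val x (tsubstTy X R T)
  | .tvar Y S => .tvar Y (tsubstShape X R S)

def tsubstEnv (X : ℕ) (R : ShapeTy) : Env → Env := List.map (tsubstBinding X R)

mutual
/-- Free (term) variables of a shape type. -/
def fvShape : ShapeTy → Finset ℕ
  | .tvar _ => ∅
  | .top => ∅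
  | .arrow x U T => fvTy U ∪ (fvTy T \ {x})
  | .tarrow _ S T => fvShape S ∪ fvTy T
  | .box T => fvTy T
/-- Free (term) variables of a type. -/
def fvTy : Ty → Finset ℕ
  | .capt C S => C ∪ fvShape S
end

mutual
/-- Avoidance: replace `x` by `C` at covariant capture-set occurrences (`pos = true`)
and delete `x` at contravariant occurrences. -/
def avoidShape (x : ℕ) (C : Finset ℕ) (pos : Bool) : ShapeTy → ShapeTy
  | .tvar X => .tvar X
  | .top => .top
  | .arrow y U T => .arrow y (avoidTy x C (!pos) U) (avoidTy x C pos T)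
  | .tarrow X S T => .tarrow X (avoidShape x C (!pos) S) (avoidTy x C pos T)
  | .box T => .box (avoidTy x C pos T)
def avoidTy (x : ℕ) (C : Finset ℕ) (pos : Bool) : Ty → Ty
  | .capt D S =>
      .capt (if x ∈ D then (if pos then (D \ {x}) ∪ C else D \ {x}) else D)
        (avoidShape x C pos S)
end

/-- `avoid x C T = avoid_x^C(T)`. -/
def avoid (x : ℕ) (C : Finset ℕ) (T : Ty) : Ty := avoidTy x C true T

/-! ## Well-formedness -/

mutual
def WfShape : Env → ShapeTy → Prop
  | Γ, .tvar X => X ∈ envTDom Γ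
  | _, .top => True
  | Γ, .arrow x U T => WfTy Γ U ∧ WfTy (Binding.val x U :: Γ) T
  | Γ, .tarrow X S T => WfShape Γ S ∧ WfTy (Binding.tvar X S :: Γ) T
  | Γ, .box T => WfTy Γ T
def WfTy : Env → Ty → Prop
  | Γ, .capt C S => C ⊆ envDom Γ ∧ WfShape Γ S
end

/-- Well-formed environments. -/
inductive EnvWf : Env → Prop where
  | nil : EnvWf []
  | val {Γ : Env} {x : ℕ} {T : Ty} : EnvWf Γ → WfTy Γ T → x ∉ envDom Γ →
      EnvWf (Binding.val x T :: Γ)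
  | tvar {Γ : Env} {X : ℕ} {S : ShapeTy} : EnvWf Γ → WfShape Γ S → X ∉ envTDom Γ →
      EnvWf (Binding.tvar X S :: Γ)

/-! ## Subcapturing -/

inductive Subcapt : Env → Finset ℕ → Finset ℕ → Prop where
  | elem {Γ : Env} {x : ℕ} {C : Finset ℕ} : x ∈ C → Subcapt Γ {x} C
  | set {Γ : Env} {C1 C2 : Finset ℕ} : (∀ x ∈ C1, Subcapt Γ {x} C2) → Subcapt Γ C1 C2
  | var {Γ : Env} {x : ℕ} {C C2 : Finset ℕ} {S : ShapeTy} :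
      Binding.val x (Ty.capt C S) ∈ Γ → Subcapt Γ C C2 → Subcapt Γ {x} C2

/-! ## Algorithmic subtyping (CC_algo) -/

mutual
inductive SubShape : Env → ShapeTy → ShapeTy → Prop where
  | refl {Γ X} : SubShape Γ (.tvar X) (.tvar X)
  | tvar {Γ X S S'} : Binding.tvar X S ∈ Γ → SubShape Γ S S' → SubShape Γ (.tvar X) S'
  | top {Γ S} : SubShape Γ S .top
  | arrow {Γ x U1 U2 T1 T2} : SubTy Γ U2 U1 → SubTy (Binding.val x U2 :: Γ) T1 T2 →
      SubShape Γ (.arrow x U1 T1) (.arrow x U2 T2)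
  | tarrow {Γ X S1 S2 T1 T2} : SubShape Γ S2 S1 → SubTy (Binding.tvar X S2 :: Γ) T1 T2 →
      SubShape Γ (.tarrow X S1 T1) (.tarrow X S2 T2)
  | boxed {Γ T1 T2} : SubTy Γ T1 T2 → SubShape Γ (.box T1) (.box T2)
inductive SubTy : Env → Ty → Ty → Prop where
  | capt {Γ C1 C2 S1 S2} : Subcapt Γ C1 C2 → SubShape Γ S1 S2 →
      SubTy Γ (.capt C1 S1) (.capt C2 S2)
end

/-! ## Declarative subtyping (CC<:) -/

mutual
inductive DSubShape : Env → ShapeTy → ShapeTy → Prop where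
  | refl {Γ S} : DSubShape Γ S S
  | trans {Γ S1 S2 S3} : DSubShape Γ S1 S2 → DSubShape Γ S2 S3 → DSubShape Γ S1 S3
  | tvar {Γ X S} : Binding.tvar X S ∈ Γ → DSubShape Γ (.tvar X) S
  | top {Γ S} : DSubShape Γ S .top
  | arrow {Γ x U1 U2 T1 T2} : DSubTy Γ U2 U1 → DSubTy (Binding.val x U2 :: Γ) T1 T2 →
      DSubShape Γ (.arrow x U1 T1) (.arrow x U2 T2)
  | tarrow {Γ X S1 S2 T1 T2} : DSubShape Γ S2 S1 → DSubTy (Binding.tvar X S2 :: Γ) T1 T2 →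
      DSubShape Γ (.tarrow X S1 T1) (.tarrow X S2 T2)
  | boxed {Γ T1 T2} : DSubTy Γ T1 T2 → DSubShape Γ (.box T1) (.box T2)
inductive DSubTy : Env → Ty → Ty → Prop where
  | refl {Γ T} : DSubTy Γ T T
  | trans {Γ T1 T2 T3} : DSubTy Γ T1 T2 → DSubTy Γ T2 T3 → DSubTy Γ T1 T3
  | capt {Γ C1 C2 S1 S2} : Subcapt Γ C1 C2 → DSubShape Γ S1 S2 →
      DSubTy Γ (.capt C1 S1) (.capt C2 S2)
end

/-! ## Type-variable widening and widened variable typing -/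

def ShapeTy.IsTVar : ShapeTy → Prop := fun S => ∃ X, S = ShapeTy.tvar X

inductive WidenTVar : Env → ℕ → ShapeTy → Prop where
  | shape {Γ X S} : Binding.tvar X S ∈ Γ → ¬ S.IsTVar → WidenTVar Γ X S
  | step {Γ X Y S} : Binding.tvar X (.tvar Y) ∈ Γ → WidenTVar Γ Y S → WidenTVar Γ X S

/-- `Γ ⊢→ x : T` for a variable (the alg-var rule). -/
def VarTypedAs (Γ : Env) (x : ℕ) (T : Ty) : Prop :=
  ∃ C S, Binding.val x (Ty.capt C S) ∈ Γ ∧ T = Ty.capt {x} S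

/-- Widened variable typing `Γ ⊢ x ⇑ C S`. -/
inductive WidenVar : Env → ℕ → Ty → Prop where
  | widen {Γ x C X S} : VarTypedAs Γ x (Ty.capt C (.tvar X)) → WidenTVar Γ X S →
      WidenVar Γ x (Ty.capt C S)
  | lookup {Γ x C S} : VarTypedAs Γ x (Ty.capt C S) → ¬ S.IsTVar →
      WidenVar Γ x (Ty.capt C S)

/-! ## Algorithmic typing (CC_algo) -/

inductive AlgTyp : Env → Tm → Ty → Prop where
  | var {Γ x C S} : Binding.val x (Ty.capt C S) ∈ Γ → AlgTyp Γ (.var x) (.capt {x} S)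
  | abs {Γ x U t T} : AlgTyp (Binding.val x U :: Γ) t T → WfTy Γ U →
      AlgTyp Γ (.abs x U t) (.capt (cv t \ {x}) (.arrow x U T))
  | tabs {Γ X S t T} : AlgTyp (Binding.tvar X S :: Γ) t T → WfShape Γ S →
      AlgTyp Γ (.tabs X S t) (.capt (cv t) (.tarrow X S T))
  | app {Γ x y z C T U T'} : WidenVar Γ x (.capt C (.arrow z T U)) →
      AlgTyp Γ (.var y) T' → SubTy Γ T' T →
      AlgTyp Γ (.app x y) (renameTy z y U)
  | tapp {Γ x X S S' T C} : WidenVar Γ x (.capt C (.tarrow X S T)) → SubShape Γ S' S →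
      AlgTyp Γ (.tapp x S') (tsubstTy X S' T)
  | box {Γ x C S} : AlgTyp Γ (.var x) (.capt C S) → C ⊆ envDom Γ →
      AlgTyp Γ (.box x) (.capt ∅ (.box (.capt C S)))
  | unbox {Γ x Cx C C' S} : WidenVar Γ x (.capt Cx (.box (.capt C S))) →
      C' ⊆ envDom Γ → Subcapt Γ C C' →
      AlgTyp Γ (.unbox C' x) (.capt C S)
  | letin {Γ x s t T U} : AlgTyp Γ s T → AlgTyp (Binding.val x T :: Γ) t U →
      AlgTyp Γ (.letin x s t) (avoid x (cvTy T) U)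

/-! ## Declarative typing (CC<:) -/

inductive DTyp : Env → Tm → Ty → Prop where
  | var {Γ x C S} : Binding.val x (Ty.capt C S) ∈ Γ → DTyp Γ (.var x) (.capt {x} S)
  | sub {Γ t T U} : DTyp Γ t T → DSubTy Γ T U → DTyp Γ t U
  | abs {Γ x U t T} : DTyp (Binding.val x U :: Γ) t T → WfTy Γ U →
      DTyp Γ (.abs x U t) (.capt (cv t \ {x}) (.arrow x U T))
  | tabs {Γ X S t T} : DTyp (Binding.tvar X S :: Γ) t T → WfShape Γ S →
      DTyp Γ (.tabs X S t) (.capt (cv t) (.tarrow X S T))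
  | app {Γ x y z C T U} : DTyp Γ (.var x) (.capt C (.arrow z T U)) → DTyp Γ (.var y) T →
      DTyp Γ (.app x y) (renameTy z y U)
  | tapp {Γ x X S T C} : DTyp Γ (.var x) (.capt C (.tarrow X S T)) →
      DTyp Γ (.tapp x S) (tsubstTy X S T)
  | box {Γ x C S} : DTyp Γ (.var x) (.capt C S) → C ⊆ envDom Γ →
      DTyp Γ (.box x) (.capt ∅ (.box (.capt C S)))
  | unbox {Γ x C D S} : DTyp Γ (.var x) (.capt D (.box (.capt C S))) → C ⊆ envDom Γ →
      DTyp Γ (.unbox C x) (.capt C S)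
  | letin {Γ x s t T U} : DTyp Γ s T → DTyp (Binding.val x T :: Γ) t U → x ∉ fvTy U →
      DTyp Γ (.letin x s t) U

/-! ## Term normalisation -/

def renameTm (z y : ℕ) : Tm → Tm
  | .var x => .var (if x = z then y else x)
  | .abs x T t => .abs x (renameTy z y T) (renameTm z y t)
  | .tabs X S t => .tabs X (renameShape z y S) (renameTm z y t)
  | .app x w => .app (if x = z then y else x) (if w = z then y else w)
  | .tapp x S => .tapp (if x = z then y else x) (renameShape z y S)
  | .letin x s t => .letin x (renameTm z y s) (renameTm z y t)
  | .box x => .box (if x = z then y else x)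
  | .unbox C x => .unbox (renameSet z y C) (if x = z then y else x)

/-- `⦅let …⦆`-style simplification of a let binding (nl-box, nl-deref, nl-rename). -/
def normLet : Tm → Tm
  | .letin y (.unbox C x) (.box z) =>
      if z = y then .var x else .letin y (.unbox C x) (.box z)
  | .letin y (.var x) u => renameTm y x u
  | .letin y s (.var z) => if z = y then s else .letin y s (.var z)
  | t => t

/-- Beta-simplification of eta-expansions (nl-beta, nl-tbeta). -/
def normLam : Tm → Tm
  | .abs z T (.app x w) => if w = z then .var x else .abs z T (.app x w)
  | .tabs X S (.tapp x (.tvar Y)) => if Y = X then .var x else .tabs X S (.tapp x (.tvar Y))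
  | t => t

/-- Term normalisation `⦅t⦆`. -/
def norm : Tm → Tm
  | .letin x s t => normLet (.letin x (norm s) (norm t))
  | .abs x T u => normLam (.abs x T (norm u))
  | .tabs X S u => normLam (.tabs X S (norm u))
  | t => t

/-! ## Adaptation subtyping (CC_adp, Figure 5) -/

/-- `[z := D]` applied to a capture set. -/
def substSet (z : ℕ) (D C : Finset ℕ) : Finset ℕ :=
  if z ∈ C then (C \ {z}) ∪ D else C

/-- Adaptation subtyping `Γ ⊢ x : T ↝ t <: U`. -/
inductive AdpSub : Env → ℕ → Ty → Tm → Ty → Prop where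
  | refl {Γ x C C' S} : Subcapt Γ C C' → AdpSub Γ x (.capt C S) (.var x) (.capt C' S)
  | tvar {Γ x X S C C' S' t} : Binding.tvar X S ∈ Γ →
      AdpSub Γ x (.capt C S) t (.capt C' S') →
      AdpSub Γ x (.capt C (.tvar X)) t (.capt C' S')
  | top {Γ x C C' S} : Subcapt Γ C C' → AdpSub Γ x (.capt C S) (.var x) (.capt C' .top)
  | boxed {Γ : Env} {x y z : ℕ} {C1 C2 Cx Cx' : Finset ℕ} {S1 S2 : ShapeTy} {ty : Tm} :
      AdpSub Γ y (.capt C1 S1) ty (.capt C2 S2) →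
      AdpSub Γ x (.capt Cx (.box (.capt C1 S1)))
        (norm (.letin y (.unbox C1 x) (.letin z ty (.box z))))
        (.capt Cx' (.box (.capt C2 S2)))
  | arrow {Γ : Env} {xf x x' z : ℕ} {U1 U2 T1 T2 T1' : Ty} {C C' : Finset ℕ} {tx tz : Tm} :
      AdpSub Γ x U2 tx U1 →
      AdpSub (Binding.val x' U1 :: Binding.val x U2 :: Γ) z T1' tz T2 →
      T1' = (if tx = Tm.var x then T1 else renameTy x x' T1) →
      Subcapt Γ (substSet xf C (cv (norm (Tm.abs x U2 (.letin x' tx (.letin z (.app xf x') tz)))))) C' →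
      AdpSub Γ xf (.capt C (.arrow x U1 T1))
        (norm (Tm.abs x U2 (.letin x' tx (.letin z (.app xf x') tz))))
        (.capt C' (.arrow x U2 T2))
  | tarrow {Γ : Env} {xf X z : ℕ} {S1 S2 : ShapeTy} {T1 T2 : Ty} {C C' : Finset ℕ} {tz : Tm} :
      SubShape Γ S2 S1 →
      AdpSub (Binding.tvar X S2 :: Γ) z T1 tz T2 →
      Subcapt Γ (substSet xf C (cv (norm (Tm.tabs X S2 (.letin z (.tapp xf (.tvar X)) tz))))) C' →
      AdpSub Γ xf (.capt C (.tarrow X S1 T1))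
        (norm (Tm.tabs X S2 (.letin z (.tapp xf (.tvar X)) tz)))
        (.capt C' (.tarrow X S2 T2))
  | box {Γ : Env} {x y : ℕ} {C C' C'' : Finset ℕ} {S S' : ShapeTy} {tx : Tm} :
      AdpSub Γ x (.capt C S) tx (.capt C' S') → C' ⊆ envDom Γ →
      AdpSub Γ x (.capt C S) (.letin y tx (.box y)) (.capt C'' (.box (.capt C' S')))
  | unbox {Γ : Env} {x y : ℕ} {C C' : Finset ℕ} {S S' : ShapeTy} {ty : Tm} :
      AdpSub Γ y (.capt C S) ty (.capt C' S') → C ⊆ envDom Γ →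
      AdpSub Γ x (.capt ∅ (.box (.capt C S))) (.letin y (.unbox C x) ty) (.capt C' S')

/-- Box adaptation `Γ ⊢ x ↝ t : T`. -/
inductive AdpTyp : Env → ℕ → Tm → Ty → Prop where
  | adapt {Γ x T0 t T} : AlgTyp Γ (.var x) T0 → AdpSub Γ x T0 t T → WfTy Γ T →
      AdpTyp Γ x t T

/-- Variable typing with unboxing `Γ ⊢ x ⇑↝ t : T`. -/
inductive VarUnbox : Env → ℕ → Tm → Ty → Prop where
  | ret {Γ x T} : WidenVar Γ x T → VarUnbox Γ x (.var x) T
  | unbox {Γ x D C S} : WidenVar Γ x (.capt D (.box (.capt C S))) → C ⊆ envDom Γ →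
      VarUnbox Γ x (.unbox C x) (.capt C S)

/-! ## Box-inference typing (CC_adp, Figure 4): `Γ ⊢→ t ↝ t' : T` -/

inductive BITyp : Env → Tm → Tm → Ty → Prop where
  | var {Γ x C S} : Binding.val x (Ty.capt C S) ∈ Γ →
      BITyp Γ (.var x) (.var x) (.capt C S)
  | abs {Γ x U t t' T} : BITyp (Binding.val x U :: Γ) t t' T → WfTy Γ U →
      BITyp Γ (.abs x U t) (.abs x U t') (.capt (cv t' \ {x}) (.arrow x U T))
  | tabs {Γ X S t t' T} : BITyp (Binding.tvar X S :: Γ) t t' T → WfShape Γ S →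
      BITyp Γ (.tabs X S t) (.tabs X S t') (.capt (cv t') (.tarrow X S T))
  | app {Γ : Env} {x y x' y' z : ℕ} {C : Finset ℕ} {U T : Ty} {tx ty : Tm} :
      VarUnbox Γ x tx (.capt C (.arrow z U T)) →
      AdpTyp Γ y ty U →
      BITyp Γ (.app x y) (norm (.letin x' tx (.letin y' ty (.app x' y'))))
        (if ty.isVar then renameTy z y T else avoid y' (cvTy U) (renameTy z y' T))
  | tapp {Γ : Env} {x x' X : ℕ} {S S' : ShapeTy} {T : Ty} {C : Finset ℕ} {tx : Tm} :
      VarUnbox Γ x tx (.capt C (.tarrow X S T)) → SubShape Γ S' S →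
      BITyp Γ (.tapp x S') (.letin x' tx (.tapp x' S')) (tsubstTy X S' T)
  | box {Γ x C S} : WidenVar Γ x (.capt C S) → C ⊆ envDom Γ →
      BITyp Γ (.box x) (.box x) (.capt ∅ (.box (.capt C S)))
  | unbox {Γ x C C' S D} : WidenVar Γ x (.capt D (.box (.capt C S))) → C ⊆ envDom Γ →
      Subcapt Γ C C' →
      BITyp Γ (.unbox C' x) (.unbox C' x) (.capt C S)
  | letin {Γ x s s' t t' U T} : BITyp Γ s s' U → BITyp (Binding.val x U :: Γ) t t' T →
      BITyp Γ (.letin x s t) (.letin x s' t') (avoid x (cvTy U) T)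

/-! ## Type-level box inference (CC_adpt, Figures 7–8) -/

/-- Term kinds. -/
inductive Kind : Type where
  | var | val | trm
deriving DecidableEq

/-- The kind of a term. -/
def Tm.cat : Tm → Kind
  | .var _ => .var
  | .abs _ _ _ => .val
  | .tabs _ _ _ => .val
  | .box _ => .val
  | _ => .trm

/-- Capture sets possibly containing the hole `◊`. -/
structure HSet : Type where
  s : Finset ℕ
  hole : Bool
deriving DecidableEq

/-- `C[x] = (C \ {◊}) ∪ {x}`: filling the hole with a variable. -/
def HSet.fill (C : HSet) (x : ℕ) : Finset ℕ := insert x C.s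

/-- `{◊}`. -/
def HSet.holeOnly : HSet := ⟨∅, true⟩

def boxedKind : Kind → Kind
  | .var => .var
  | _ => .trm

def boxedSet (κ : Kind) (Ch : HSet) (C1 : Finset ℕ) : HSet :=
  match κ with
  | .var => HSet.holeOnly
  | .val => ⟨C1, true⟩
  | .trm => ⟨Ch.s ∪ C1, true⟩

/-- Type-level adaptation subtyping `Γ ⊢ T ↝ <: U ⇒ (κ, C)`. -/
inductive AdptSub : Env → Ty → Ty → Kind → HSet → Prop where
  | refl {Γ C C' S} : Subcapt Γ C C' →
      AdptSub Γ (.capt C S) (.capt C' S) .var HSet.holeOnly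
  | tvar {Γ X S C C' S' κ Ch} : Binding.tvar X S ∈ Γ →
      AdptSub Γ (.capt C S) (.capt C' S') κ Ch →
      AdptSub Γ (.capt C (.tvar X)) (.capt C' S') κ Ch
  | top {Γ C C' S} : Subcapt Γ C C' →
      AdptSub Γ (.capt C S) (.capt C' .top) .var HSet.holeOnly
  | boxed {Γ C1 S1 C2 S2 Cx Cy κ Ch} :
      AdptSub Γ (.capt C1 S1) (.capt C2 S2) κ Ch →
      AdptSub Γ (.capt Cx (.box (.capt C1 S1))) (.capt Cy (.box (.capt C2 S2)))
        (boxedKind κ) (boxedSet κ Ch C1)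
  | arrow {Γ : Env} {x x' : ℕ} {U1 U2 T1 T2 : Ty} {C C' : Finset ℕ} {κ1 κ2 : Kind}
      {C1 C2 : HSet} :
      AdptSub Γ U2 U1 κ1 C1 →
      AdptSub (Binding.val x' U1 :: Binding.val x U2 :: Γ)
        (if κ1 = Kind.var then T1 else renameTy x x' T1) T2 κ2 C2 →
      Subcapt Γ (((C1.s ∪ C2.s) \ {x, x'}) ∪ C) C' →
      AdptSub Γ (.capt C (.arrow x U1 T1)) (.capt C' (.arrow x U2 T2))
        (if κ1 = Kind.var ∧ κ2 = Kind.var then Kind.var else Kind.val)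
        ⟨(C1.s ∪ C2.s) \ {x, x'}, true⟩
  | tarrow {Γ : Env} {X : ℕ} {S1 S2 : ShapeTy} {T1 T2 : Ty} {C C' : Finset ℕ} {κ : Kind}
      {C2 : HSet} :
      SubShape Γ S2 S1 →
      AdptSub (Binding.tvar X S2 :: Γ) T1 T2 κ C2 →
      Subcapt Γ (C2.s ∪ C) C' →
      AdptSub Γ (.capt C (.tarrow X S1 T1)) (.capt C' (.tarrow X S2 T2))
        (if κ = Kind.var then Kind.var else Kind.val) ⟨C2.s, false⟩
  | box {Γ : Env} {C1 C2 D : Finset ℕ} {S1 S2 : ShapeTy} {κ : Kind} {C0 : HSet} :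
      AdptSub Γ (.capt C1 S1) (.capt C2 S2) κ C0 → C2 ⊆ envDom Γ →
      AdptSub Γ (.capt C1 S1) (.capt D (.box (.capt C2 S2))) Kind.trm
        (if κ = Kind.trm then C0 else ⟨∅, false⟩)
  | unbox {Γ : Env} {C1 C2 Cx : Finset ℕ} {S1 S2 : ShapeTy} {κ : Kind} {C0 : HSet} :
      AdptSub Γ (.capt C1 S1) (.capt C2 S2) κ C0 → C1 ⊆ envDom Γ →
      AdptSub Γ (.capt Cx (.box (.capt C1 S1))) (.capt C2 S2) Kind.trm ⟨C1 ∪ C0.s, true⟩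

/-- Type-level box adaptation `Γ ⊢ x ↝ : T ⇒ (κ, C)`. -/
inductive AdptVar : Env → ℕ → Ty → Kind → Finset ℕ → Prop where
  | adapt {Γ x U T κ Ch} : AlgTyp Γ (.var x) U → AdptSub Γ U T κ Ch → WfTy Γ T →
      AdptVar Γ x T κ (Ch.fill x)

/-- Type-level variable typing with unboxing `Γ ⊢ x ⇑↝ : T ⇒ C`. -/
inductive VarUnboxT : Env → ℕ → Ty → Finset ℕ → Prop where
  | ret {Γ x T} : WidenVar Γ x T → VarUnboxT Γ x T {x}
  | unbox {Γ x D C S} : WidenVar Γ x (.capt D (.box (.capt C S))) → C ⊆ envDom Γ →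
      VarUnboxT Γ x (.capt C S) (insert x C)

/-- Type-level box-inference typing `Γ ⊢→ t : T ⇒ C`. -/
inductive AdptTyp : Env → Tm → Ty → Finset ℕ → Prop where
  | var {Γ x C S} : Binding.val x (Ty.capt C S) ∈ Γ →
      AdptTyp Γ (.var x) (.capt {x} S) {x}
  | abs {Γ x U t T C} : AdptTyp (Binding.val x U :: Γ) t T C → WfTy Γ U →
      AdptTyp Γ (.abs x U t) (.capt (C \ {x}) (.arrow x U T)) (C \ {x})
  | tabs {Γ X S t T C} : AdptTyp (Binding.tvar X S :: Γ) t T C → WfShape Γ S →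
      AdptTyp Γ (.tabs X S t) (.capt C (.tarrow X S T)) C
  | app {Γ : Env} {x y z : ℕ} {C C1 C2 : Finset ℕ} {U T : Ty} {κ : Kind} :
      VarUnboxT Γ x (.capt C (.arrow z U T)) C1 →
      AdptVar Γ y U κ C2 →
      AdptTyp Γ (.app x y)
        (if κ = Kind.var then renameTy z y T else avoid z (cvTy U) T)
        (C1 ∪ C2)
  | tapp {Γ x X S S' T C} : VarUnboxT Γ x (.capt C (.tarrow X S T)) C →
      SubShape Γ S' S →
      AdptTyp Γ (.tapp x S') (tsubstTy X S' T) C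
  | box {Γ x C S} : WidenVar Γ x (.capt C S) → C ⊆ envDom Γ →
      AdptTyp Γ (.box x) (.capt ∅ (.box (.capt C S))) ∅
  | unbox {Γ x D C C' S} : WidenVar Γ x (.capt D (.box (.capt C S))) → C ⊆ envDom Γ →
      Subcapt Γ C C' →
      AdptTyp Γ (.unbox C' x) (.capt C S) (insert x C')
  | letin {Γ x s t U T C1 C2} : AdptTyp Γ s U C1 →
      AdptTyp (Binding.val x U :: Γ) t T C2 →
      AdptTyp Γ (.letin x s t) (avoid x (cvTy U) T)
        (if s.isValue = true ∧ x ∉ C2 then C2 else C1 ∪ (C2 \ {x}))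



theorem subcapt_mono {Γ Γ' : Env} {C C' : Finset ℕ}
    (h : Subcapt Γ C C') (hi : ∀ b ∈ Γ, b ∈ Γ') : Subcapt Γ' C C' := by
  induction h with
  | elem hx => exact .elem hx
  | set _ ih => exact .set fun y hy => ih y hy
  | var hb _ ih => exact .var (hi _ hb) ih

theorem cons_incl {b0 : Binding} {Γ Γ' : Env} (hi : ∀ b ∈ Γ, b ∈ Γ') :
    ∀ b ∈ (b0 :: Γ), b ∈ (b0 :: Γ') := by
  intro b hb
  rcases List.mem_cons.1 hb with h | h
  · exact h ▸ (List.mem_cons_self (a := b0) (l := Γ'))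
  · exact List.mem_cons_of_mem _ (hi _ h)

theorem subshape_mono {Γ : Env} {S S' : ShapeTy} (h : SubShape Γ S S') :
    ∀ Γ', (∀ b ∈ Γ, b ∈ Γ') → SubShape Γ' S S' := by
  induction h using SubShape.rec
    (motive_2 := fun Γ T U _ => ∀ Γ', (∀ b ∈ Γ, b ∈ Γ') → SubTy Γ' T U) with
  | refl => exact fun _ _ => .refl
  | tvar hb _ ih => exact fun Γ' hi => .tvar (hi _ hb) (ih Γ' hi)
  | top => exact fun _ _ => .top
  | arrow _ _ ihU ihT => exact fun Γ' hi => .arrow (ihU Γ' hi) (ihT _ (cons_incl hi))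
  | tarrow _ _ ihS ihT => exact fun Γ' hi => .tarrow (ihS Γ' hi) (ihT _ (cons_incl hi))
  | boxed _ ih => exact fun Γ' hi => .boxed (ih Γ' hi)
  | capt hc _ ih =>
    rename_i Γ'' hi
    exact SubTy.capt (subcapt_mono hc hi) (ih Γ'' hi)

theorem subty_mono {Γ Γ' : Env} {T U : Ty} (h : SubTy Γ T U)
    (hi : ∀ b ∈ Γ, b ∈ Γ') : SubTy Γ' T U := by
  cases h with
  | capt hc hs => exact .capt (subcapt_mono hc hi) (subshape_mono hs Γ' hi)

theorem adp_shape {Γ : Env} {S S' : ShapeTy} (h : SubShape Γ S S') :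
    ∀ (Γ' : Env) (C C' : Finset ℕ) (x : ℕ), (∀ b ∈ Γ, b ∈ Γ') → Subcapt Γ' C C' →
      AdpSub Γ' x (.capt C S) (.var x) (.capt C' S') := by
  induction h using SubShape.rec
    (motive_2 := fun Γ T U _ => ∀ (Γ' : Env) (x : ℕ), (∀ b ∈ Γ, b ∈ Γ') →
      AdpSub Γ' x T (.var x) U) with
  | refl => exact fun _ _ _ _ _ hc => .refl hc
  | tvar hb _ ih => exact fun Γ' C C' x hi hc => .tvar (hi _ hb) (ih Γ' C C' x hi hc)
  | top => exact fun _ _ _ _ _ hc => .top hc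
  | arrow hU hT ihU ihT =>
    rename_i Γ0 a U1 U2 T1 T2
    intro Γ' C C' x hi hc
    have h1 : AdpSub Γ' a U2 (.var a) U1 := ihU Γ' a hi
    have h2 : AdpSub (Binding.val (x+1) U1 :: Binding.val a U2 :: Γ') (x+2) T1
        (.var (x+2)) T2 :=
      ihT _ (x+2) (fun b hb => List.mem_cons_of_mem _ (cons_incl hi b hb))
    have hnorm : _root_.norm (Tm.abs a U2 (.letin (x+1) (.var a)
        (.letin (x+2) (.app x (x+1)) (.var (x+2))))) = Tm.var x := by
      have hx : x ≠ x + 1 := by omega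
      simp [_root_.norm, normLet, normLam, renameTm, hx]
    have heq : T1 = (if (Tm.var a : Tm) = Tm.var a then T1 else renameTy a (x+1) T1) := by
      simp
    have hsc : Subcapt Γ' (substSet x C (cv (_root_.norm (Tm.abs a U2 (.letin (x+1) (.var a)
        (.letin (x+2) (.app x (x+1)) (.var (x+2)))))))) C' := by
      rw [hnorm]; simpa [substSet, cv] using hc
    have hfin := AdpSub.arrow (Γ := Γ') (xf := x) (x := a) (x' := x+1) (z := x+2)
      (T1' := T1) (T2 := T2) (U1 := U1) (U2 := U2) (C := C) (C' := C')
      (tx := .var a) (tz := .var (x+2)) h1 h2 heq hsc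
    rwa [hnorm] at hfin
  | tarrow hS hT ihS ihT =>
    rename_i Γ0 X S1 S2 T1 T2
    intro Γ' C C' x hi hc
    have h1 : SubShape Γ' S2 S1 := subshape_mono hS Γ' hi
    have h2 : AdpSub (Binding.tvar X S2 :: Γ') (x+1) T1 (.var (x+1)) T2 :=
      ihT _ (x+1) (cons_incl hi)
    have hnorm : _root_.norm (Tm.tabs X S2 (.letin (x+1) (.tapp x (.tvar X))
        (.var (x+1)))) = Tm.var x := by
      simp [_root_.norm, normLet, normLam]
    have hfin := AdpSub.tarrow (Γ := Γ') (xf := x) (z := x+1)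
      h1 h2 (by rw [hnorm]; simpa [substSet, cv] using hc)
    rwa [hnorm] at hfin
  | boxed hT ih =>
    rename_i Γ0 T1 T2
    intro Γ' C C' x hi hc
    obtain ⟨C1, S1⟩ := T1
    obtain ⟨C2, S2⟩ := T2
    have h1 : AdpSub Γ' 0 (.capt C1 S1) (.var 0) (.capt C2 S2) := ih Γ' 0 hi
    have hnorm : _root_.norm (Tm.letin 0 (.unbox C1 x) (.letin 1 (.var 0) (.box 1)))
        = Tm.var x := by
      simp [_root_.norm, normLet, renameTm]
    have hfin := AdpSub.boxed (Γ := Γ') (x := x) (y := 0) (z := 1)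
      (Cx := C) (Cx' := C') h1
    rwa [hnorm] at hfin
  | capt hc _ ih =>
    rename_i Γ'' x hi
    exact ih Γ'' _ _ x hi (subcapt_mono hc hi)

theorem adp_ty {Γ : Env} {T U : Ty} (h : SubTy Γ T U) (x : ℕ) :
    AdpSub Γ x T (.var x) U := by
  cases h with
  | capt hc hs => exact adp_shape hs Γ _ _ x (fun _ hb => hb) hc


/-- Completeness of box adaptation: if the widened type of `x` is an
algorithmic subtype of `U`, adaptation subtyping returns `x` unchanged. -/
theorem box_adaptation_completeness
    {Γ : Env} {x : ℕ} {T U : Ty}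
    (h1 : WidenVar Γ x T) (h2 : SubTy Γ T U) :
    AdpSub Γ x T (Tm.var x) U :=
  adp_ty h2 x
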